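/- Let C be a counital R-coalgebra, C• = (C*)^op, and regard C as a (C•,C•)-bimodule via f ⇁ c = Σ f(c₁)c₂ and c ↽ g = Σ c₁g(c₂). Then the map Δ_𝐂 : C → C ⊗_{C•} C obtained by composing Δ_C : C → C ⊗_R C with the canonical surjection C ⊗_R C → C ⊗_{C•} C is (C•,C•)-bilinear and coassociative; that is, C is a (not necessarily counital) C•-coring. -/
import Mathlib


open TensorProduct

variable {R : Type*} [CommRing R] {C : Type*} [AddCommGroup C] [Module R C]

/-- The left action `f ⇁ c = Σ f(c₁) c₂`. -/
noncomputable def lact (Δ : C →ₗ[R] C ⊗[R] C) (f : C →ₗ[R] R) : C →ₗ[R] C :=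
  (TensorProduct.lid R C).toLinearMap ∘ₗ TensorProduct.map f LinearMap.id ∘ₗ Δ

/-- The right action `c ↽ g = Σ c₁ g(c₂)`. -/
noncomputable def ract (Δ : C →ₗ[R] C ⊗[R] C) (g : C →ₗ[R] R) : C →ₗ[R] C :=
  (TensorProduct.rid R C).toLinearMap ∘ₗ TensorProduct.map LinearMap.id g ∘ₗ Δ

/-- The `C•`-balancing submodule of `C ⊗_R C`, so that
`(C ⊗_R C) ⧸ bal Δ = C ⊗_{C•} C`. -/
noncomputable def bal (Δ : C →ₗ[R] C ⊗[R] C) : Submodule R (C ⊗[R] C) :=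
  Submodule.span R
    {z | ∃ (f : C →ₗ[R] R) (c d : C), z = (ract Δ f c) ⊗ₜ[R] d - c ⊗ₜ[R] (lact Δ f d)}

/-- The balancing submodule of `C ⊗_R C ⊗_R C` giving `C ⊗_{C•} C ⊗_{C•} C`. -/
noncomputable def bal3 (Δ : C →ₗ[R] C ⊗[R] C) : Submodule R (C ⊗[R] (C ⊗[R] C)) :=
  Submodule.span R
    ({z | ∃ (f : C →ₗ[R] R) (c d e : C),
        z = (ract Δ f c) ⊗ₜ[R] (d ⊗ₜ[R] e) - c ⊗ₜ[R] ((lact Δ f d) ⊗ₜ[R] e)} ∪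
      {z | ∃ (f : C →ₗ[R] R) (c d e : C),
        z = c ⊗ₜ[R] ((ract Δ f d) ⊗ₜ[R] e) - c ⊗ₜ[R] (d ⊗ₜ[R] (lact Δ f e))})

/-- for a counital `R`-coalgebra `C`, the composite of `Δ_C` with the
canonical surjection `C ⊗_R C → C ⊗_{C•} C` is `(C•,C•)`-bilinear and coassociative
(in `C ⊗_{C•} C ⊗_{C•} C`); that is, `C` is a (not necessarily counital)
`C•`-coring. -/
theorem coalgebra_is_coring
    (Δ : C →ₗ[R] C ⊗[R] C) (ε : C →ₗ[R] R)
    (hco : (TensorProduct.assoc R C C C).toLinearMap ∘ₗ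
        TensorProduct.map Δ LinearMap.id ∘ₗ Δ = TensorProduct.map LinearMap.id Δ ∘ₗ Δ)
    (hεl : (TensorProduct.lid R C).toLinearMap ∘ₗ TensorProduct.map ε LinearMap.id ∘ₗ Δ
        = LinearMap.id)
    (hεr : (TensorProduct.rid R C).toLinearMap ∘ₗ TensorProduct.map LinearMap.id ε ∘ₗ Δ
        = LinearMap.id) :
    (∀ (f : C →ₗ[R] R) (c : C),
      (bal Δ).mkQ (Δ (lact Δ f c))
        = (bal Δ).mkQ (TensorProduct.map (lact Δ f) LinearMap.id (Δ c))) ∧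
    (∀ (g : C →ₗ[R] R) (c : C),
      (bal Δ).mkQ (Δ (ract Δ g c))
        = (bal Δ).mkQ (TensorProduct.map LinearMap.id (ract Δ g) (Δ c))) ∧
    (∀ c : C,
      (bal3 Δ).mkQ ((TensorProduct.assoc R C C C)
          (TensorProduct.map Δ LinearMap.id (Δ c)))
        = (bal3 Δ).mkQ (TensorProduct.map LinearMap.id Δ (Δ c))) := by
  refine ⟨?_, ?_, ?_⟩
  · intro f c
    congr 1
    have h := LinearMap.congr_fun hco c
    set φ : C ⊗[R] (C ⊗[R] C) →ₗ[R] C ⊗[R] C :=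
      (TensorProduct.lid R (C ⊗[R] C)).toLinearMap ∘ₗ
        TensorProduct.map f LinearMap.id with hφ
    have h1 : Δ ∘ₗ ((TensorProduct.lid R C).toLinearMap ∘ₗ
        TensorProduct.map f LinearMap.id)
        = φ ∘ₗ TensorProduct.map LinearMap.id Δ := by
      apply TensorProduct.ext'
      intro a b
      simp [hφ, TensorProduct.smul_tmul']
    have h2 : φ ∘ₗ (TensorProduct.assoc R C C C).toLinearMap
        = TensorProduct.map ((TensorProduct.lid R C).toLinearMap ∘ₗ
            TensorProduct.map f LinearMap.id) LinearMap.id := by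
      apply TensorProduct.ext_threefold
      intro a b e
      simp [hφ, TensorProduct.smul_tmul']
    have e1 : Δ (lact Δ f c) = φ (TensorProduct.map LinearMap.id Δ (Δ c)) := by
      simpa [lact, LinearMap.comp_apply] using
        LinearMap.congr_fun h1 (Δ c)
    have e2 : TensorProduct.map (lact Δ f) LinearMap.id (Δ c)
        = φ ((TensorProduct.assoc R C C C)
            (TensorProduct.map Δ LinearMap.id (Δ c))) := by
      have hm : TensorProduct.map (lact Δ f) (LinearMap.id : C →ₗ[R] C)
          = TensorProduct.map ((TensorProduct.lid R C).toLinearMap ∘ₗ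
              TensorProduct.map f LinearMap.id) (LinearMap.id : C →ₗ[R] C) ∘ₗ
            TensorProduct.map Δ (LinearMap.id : C →ₗ[R] C) := by
        rw [← TensorProduct.map_comp]
        rfl
      rw [hm, ← h2]
      simp [LinearMap.comp_apply]
    have h' : (TensorProduct.assoc R C C C)
        (TensorProduct.map Δ LinearMap.id (Δ c))
        = TensorProduct.map LinearMap.id Δ (Δ c) := by
      simpa [LinearMap.comp_apply] using h
    rw [e1, e2, h']
  · intro g c
    congr 1
    have h := LinearMap.congr_fun hco c
    set ψ : (C ⊗[R] C) ⊗[R] C →ₗ[R] C ⊗[R] C :=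
      (TensorProduct.rid R (C ⊗[R] C)).toLinearMap ∘ₗ
        TensorProduct.map (LinearMap.id : C ⊗[R] C →ₗ[R] C ⊗[R] C) g with hψ
    have h1 : Δ ∘ₗ ((TensorProduct.rid R C).toLinearMap ∘ₗ
        TensorProduct.map LinearMap.id g)
        = ψ ∘ₗ TensorProduct.map Δ LinearMap.id := by
      apply TensorProduct.ext'
      intro a b
      simp [hψ, TensorProduct.tmul_smul]
    have h2 : ψ = (TensorProduct.map LinearMap.id
          ((TensorProduct.rid R C).toLinearMap ∘ₗ TensorProduct.map LinearMap.id g)) ∘ₗ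
        (TensorProduct.assoc R C C C).toLinearMap := by
      apply TensorProduct.ext_threefold
      intro a b e
      simp [hψ, TensorProduct.tmul_smul, TensorProduct.smul_tmul']
    have e1 : Δ (ract Δ g c) = ψ (TensorProduct.map Δ LinearMap.id (Δ c)) := by
      simpa [ract, LinearMap.comp_apply] using
        LinearMap.congr_fun h1 (Δ c)
    have e2 : TensorProduct.map LinearMap.id (ract Δ g) (Δ c)
        = (TensorProduct.map LinearMap.id
            ((TensorProduct.rid R C).toLinearMap ∘ₗ TensorProduct.map LinearMap.id g))
          (TensorProduct.map LinearMap.id Δ (Δ c)) := by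
      have hm : TensorProduct.map (LinearMap.id : C →ₗ[R] C) (ract Δ g)
          = TensorProduct.map (LinearMap.id : C →ₗ[R] C)
              ((TensorProduct.rid R C).toLinearMap ∘ₗ TensorProduct.map LinearMap.id g) ∘ₗ
            TensorProduct.map (LinearMap.id : C →ₗ[R] C) Δ := by
        rw [← TensorProduct.map_comp]
        rfl
      rw [hm]; rfl
    have h' : (TensorProduct.assoc R C C C)
        (TensorProduct.map Δ LinearMap.id (Δ c))
        = TensorProduct.map LinearMap.id Δ (Δ c) := by
      simpa [LinearMap.comp_apply] using h
    rw [e1, e2, h2]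
    simp only [LinearMap.comp_apply]
    exact congrArg _ h'
  · intro c
    congr 1
    exact LinearMap.congr_fun hco c
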